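/- arXiv:1808.03214 — 3 statements merged into one kernel-verified Lean document; each statement's English description precedes it below -/
import Mathlib

section
/- With the setup of the quotient ring A = R[η]/(η^k + s_1 η^{k-1} + ... + s_k) where s_i = s_i(x_1,...,x_k) are the elementary symmetric polynomials in variables x_1,...,x_k over a base ring, and writing η^{d+k-1} = ∑_{i=0}^{k-1} q_{d,i} η^{k-1-i}, one has (-1)^d · q_{d,i} = ∑_{j=1}^{d} (-1)^{j-1} s_{i+j} · p_{d-j}, where p_j = p_j(x_1,...,x_k) is the complete homogeneous symmetric polynomial of degree j (p_0 = 1) and s_j = 0 for j > k. -/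
/-!
Multiplication by `η` on `A = R[η]/(f)`, in the coordinates of `η^{k-1}, …, η, 1`, shifts the
coordinates up by one and feeds the leading one back through `η^k = -∑ s_{i+1} η^{k-1-i}`: if
`η^{d+k-1}` has coordinates `c_i`, then `η^{d+k}` has coordinates `c_{i+1} - c_0 s_{i+1}`. The
claimed coordinates satisfy this recurrence because their leading one is `(-1)^d p_d`, which is
the identity `∑_j (-1)^j s_j p_{n-j} = 0` (`n ≥ 1`) read off from
`∏ (1 - x_i t) · ∏ (1 - x_i t)⁻¹ = 1`.
-/

open Finset Polynomial MvPolynomial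

/-- The complete homogeneous symmetric polynomial of degree `d` in `k` variables. -/
noncomputable def hsymm (k d : ℕ) : MvPolynomial (Fin k) ℤ :=
  ∑ f ∈ Finset.Nat.antidiagonalTuple k d, ∏ i, MvPolynomial.X i ^ f i

namespace PowerSeries

theorem coeff_prod_mk_pow {R : Type*} [CommSemiring R] {k : ℕ} (x : Fin k → R) (d : ℕ) :
    coeff d (∏ i, mk fun e => x i ^ e) =
      ∑ f ∈ Nat.antidiagonalTuple k d, ∏ i, x i ^ f i := by
  rw [coeff_prod, ← piAntidiag_univ_fin_eq_antidiagonalTuple, finsuppAntidiag, sum_map,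
    ← sum_attach (piAntidiag _ _)]
  simp [coeff_mk]

variable {R : Type*} [CommRing R]

theorem one_sub_C_mul_X_mul_mk_pow (a : R) : (1 - C a * X) * mk (a ^ ·) = 1 := by
  have := congrArg (rescale a) (mk_one_mul_one_sub_eq_one R)
  simpa [rescale_mk, rescale_X, mul_comm] using this

theorem coeff_prod_one_sub_C_mul_X {ι : Type*} [Fintype ι] (x : ι → R) (n : ℕ) :
    coeff n (∏ i, (1 - C (x i) * X)) =
      (-1) ^ n * ∑ t ∈ powersetCard n univ, ∏ i ∈ t, x i := by
  classical
  simp_rw [sub_eq_add_neg, ← neg_mul, ← map_neg, prod_one_add, prod_mul_distrib, prod_const,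
    ← map_prod, map_sum, coeff_C_mul_X_pow]
  rw [sum_ite, sum_const_zero, add_zero, powersetCard_eq_filter, mul_sum]
  refine sum_congr (by simp_rw [eq_comm]) fun t ht => ?_
  rw [prod_neg, (mem_filter.1 ht).2]

end PowerSeries

section RemainderOfPowers

variable {R : Type*} [CommRing R]

def signedConv (a h : ℕ → R) (d i : ℕ) : R :=
  ∑ j ∈ range d, (-1) ^ j * a (i + j + 1) * h (d - 1 - j)

theorem signedConv_succ (a h : ℕ → R) (d i : ℕ) :
    signedConv a h (d + 1) i = a (i + 1) * h d - signedConv a h d (i + 1) := by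
  rw [signedConv, sum_range_succ', signedConv, sub_eq_add_neg, ← sum_neg_distrib, add_comm]
  congr 1
  · simp
  · refine sum_congr rfl fun j _ => ?_
    rw [show i + (j + 1) + 1 = i + 1 + j + 1 by omega,
      show d + 1 - 1 - (j + 1) = d - 1 - j by omega]
    ring

theorem signedConv_eq_zero_of_le {k : ℕ} {a : ℕ → R} (ha : ∀ n, k < n → a n = 0)
    (h : ℕ → R) (d : ℕ) {i : ℕ} (hi : k ≤ i) : signedConv a h d i = 0 :=
  sum_eq_zero fun j _ => by rw [ha _ (by omega), mul_zero, zero_mul]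

noncomputable def descPoly (k : ℕ) (c : ℕ → R) : R[X] :=
  ∑ i ∈ range k, Polynomial.C (c i) * Polynomial.X ^ (k - 1 - i)

theorem degree_descPoly_lt (k : ℕ) (c : ℕ → R) : (descPoly k c).degree < k :=
  (degree_sum_le _ _).trans_lt <| (Finset.sup_lt_iff (WithBot.bot_lt_coe k)).2 fun i hi =>
    (degree_C_mul_X_pow_le _ _).trans_lt <| Nat.cast_lt.2 (by have := mem_range.1 hi; omega)

theorem coeff_descPoly {k i : ℕ} (c : ℕ → R) (hi : i < k) :
    (descPoly k c).coeff (k - 1 - i) = c i := by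
  simp only [descPoly, finsetSum_coeff, coeff_C_mul_X_pow]
  rw [sum_eq_single_of_mem i (mem_range.2 hi)
    fun j hj _ => if_neg (by have := mem_range.1 hj; omega), if_pos rfl]

theorem descPoly_sub_C_mul (k : ℕ) (c a : ℕ → R) (b : R) :
    descPoly k (fun i => c i - b * a i) = descPoly k c - Polynomial.C b * descPoly k a := by
  simp only [descPoly, mul_sum, ← sum_sub_distrib, map_sub, map_mul]
  exact sum_congr rfl fun i _ => by ring

theorem descPoly_mul_X {k : ℕ} {c : ℕ → R} (hc : c k = 0) :
    descPoly k c * Polynomial.X =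
      Polynomial.C (c 0) * Polynomial.X ^ k + descPoly k (fun i => c (i + 1)) := by
  cases k with
  | zero => simp [descPoly, hc]
  | succ k =>
    simp only [descPoly, sum_mul]
    rw [sum_range_succ', sum_range_succ, hc, map_zero, zero_mul, add_zero, add_comm]
    congr 1
    · rw [mul_assoc, ← pow_succ]; rfl
    · refine sum_congr rfl fun i hi => ?_
      rw [mul_assoc, ← pow_succ,
        show k + 1 - 1 - (i + 1) + 1 = k + 1 - 1 - i by have := mem_range.1 hi; omega]

theorem X_pow_modByMonic_eq_descPoly {k : ℕ} {a h : ℕ → R} (ha : ∀ n, k < n → a n = 0)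
    (h_zero : h 0 = 1) (h_rec : ∀ d, 1 ≤ d → h d = signedConv a h d 0) {d : ℕ}
    (hd : 1 ≤ d) :
    Polynomial.X ^ (d + k - 1) %ₘ (Polynomial.X ^ k + descPoly k fun i => a (i + 1)) =
      descPoly k fun i => (-1) ^ d * signedConv a h d i := by
  set F : R[X] := Polynomial.X ^ k + descPoly k fun i => a (i + 1)
  have hF : F.Monic := monic_X_pow_add (degree_descPoly_lt _ _)
  have hdvd :
      F ∣ Polynomial.X ^ (d + k - 1) - descPoly k fun i => (-1) ^ d * signedConv a h d i := by
    induction d, hd using Nat.le_induction with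
    | base =>
      have hc : (fun i => (-1) ^ 1 * signedConv a h 1 i) = fun i => 0 - 1 * a (i + 1) := by
        funext i; simp [signedConv, h_zero]
      rw [hc, descPoly_sub_C_mul, Nat.add_sub_cancel_left]
      simp [descPoly, F]
    | succ d hd ih =>
      set c : ℕ → R := fun i => (-1) ^ d * signedConv a h d i
      set c' : ℕ → R := fun i => (-1) ^ (d + 1) * signedConv a h (d + 1) i
      have hc : c k = 0 := by simp [c, signedConv_eq_zero_of_le ha h d le_rfl]
      have hstep : descPoly k c * Polynomial.X - descPoly k c' = Polynomial.C (c 0) * F := by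
        have hc' : c' = fun i => c (i + 1) - c 0 * a (i + 1) := by
          funext i; simp only [c, c', signedConv_succ, ← h_rec d hd]; ring
        rw [hc', descPoly_sub_C_mul k (fun i => c (i + 1)) (fun i => a (i + 1)),
          descPoly_mul_X hc]
        ring
      have hsplit : Polynomial.X ^ (d + 1 + k - 1) - descPoly k c' =
          Polynomial.X * (Polynomial.X ^ (d + k - 1) - descPoly k c) +
            Polynomial.C (c 0) * F := by
        rw [← hstep, show d + 1 + k - 1 = d + k - 1 + 1 by omega, pow_succ]
        ring
      rw [hsplit]
      exact dvd_add (dvd_mul_of_dvd_right ih _) (dvd_mul_left _ _)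
  rw [modByMonic_eq_of_dvd_sub hF hdvd]
  nontriviality R
  rw [modByMonic_eq_self_iff hF, degree_add_eq_left_of_degree_lt] <;>
    rw [degree_X_pow] <;> exact degree_descPoly_lt _ _

end RemainderOfPowers

theorem esymm_eq_zero_of_card_lt {σ R : Type*} [Fintype σ] [CommSemiring R] {n : ℕ}
    (hn : Fintype.card σ < n) : esymm σ R n = 0 := by
  rw [esymm, powersetCard_eq_empty.2 (by simpa using hn), sum_empty]

theorem hsymm_zero (k : ℕ) : hsymm k 0 = 1 := by
  simp [_root_.hsymm, Finset.Nat.antidiagonalTuple_zero_right]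

theorem sum_range_neg_one_pow_mul_esymm_mul_hsymm {k n : ℕ} (hn : 1 ≤ n) :
    ∑ j ∈ range (n + 1), (-1) ^ j * esymm (Fin k) ℤ j * hsymm k (n - j) = 0 := by
  have hEH : (∏ i, (1 - PowerSeries.C (MvPolynomial.X i) * PowerSeries.X)) *
      ∏ i : Fin k, PowerSeries.mk (MvPolynomial.X i ^ ·) =
        (1 : PowerSeries (MvPolynomial (Fin k) ℤ)) := by
    rw [← prod_mul_distrib]
    exact prod_eq_one fun i _ => PowerSeries.one_sub_C_mul_X_mul_mk_pow _
  have := congrArg (PowerSeries.coeff n) hEH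
  rw [PowerSeries.coeff_mul, Nat.sum_antidiagonal_eq_sum_range_succ_mk, PowerSeries.coeff_one,
    if_neg (by omega)] at this
  simp only [PowerSeries.coeff_prod_one_sub_C_mul_X, PowerSeries.coeff_prod_mk_pow] at this
  exact this

theorem hsymm_eq_signedConv {k d : ℕ} (hd : 1 ≤ d) :
    hsymm k d = signedConv (esymm (Fin k) ℤ) (hsymm k) d 0 := by
  have h := sum_range_neg_one_pow_mul_esymm_mul_hsymm (k := k) hd
  rw [sum_range_succ'] at h
  simp only [pow_zero, one_mul, esymm_zero, Nat.sub_zero] at h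
  rw [signedConv, ← neg_eq_iff_add_eq_zero.mpr h, ← sum_neg_distrib]
  refine sum_congr rfl fun j _ => ?_
  rw [zero_add, show d - 1 - j = d - (j + 1) by omega, pow_succ]
  ring

/-- With `R = ℤ[x_1,…,x_k]`, `s_i` the elementary symmetric polynomials, and
`A = R[η]/(η^k + s_1 η^{k-1} + ⋯ + s_k)`, writing
`η^{d+k-1} = ∑_{i=0}^{k-1} q_{d,i} η^{k-1-i}`, one has
`(-1)^d q_{d,i} = ∑_{j=1}^{d} (-1)^{j-1} s_{i+j} p_{d-j}` where `p_j` is the complete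
homogeneous symmetric polynomial of degree `j`. -/
theorem stmt_6 (k : ℕ) (hk : 1 ≤ k) :
    let s : ℕ → MvPolynomial (Fin k) ℤ := fun i => esymm (Fin k) ℤ i
    let f : Polynomial (MvPolynomial (Fin k) ℤ) :=
      Polynomial.X ^ k + ∑ i ∈ range k, Polynomial.C (s (i + 1)) * Polynomial.X ^ (k - 1 - i)
    let q : ℕ → ℕ → MvPolynomial (Fin k) ℤ := fun d i =>
      ((Polynomial.X ^ (d + k - 1)) %ₘ f).coeff (k - 1 - i)
    ∀ d, 1 ≤ d → ∀ i ≤ k - 1,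
      (-1 : MvPolynomial (Fin k) ℤ) ^ d * q d i
        = ∑ j ∈ range d, (-1 : MvPolynomial (Fin k) ℤ) ^ j * s (i + j + 1) * hsymm k (d - 1 - j) := by
  intro s f q d hd i hi
  have hrem : Polynomial.X ^ (d + k - 1) %ₘ f =
      descPoly k fun i => (-1) ^ d * signedConv s (hsymm k) d i :=
    X_pow_modByMonic_eq_descPoly (fun n hn => esymm_eq_zero_of_card_lt (by simpa using hn))
      (hsymm_zero k) (fun d hd => hsymm_eq_signedConv hd) hd
  have hq : q d i = (-1) ^ d * signedConv s (hsymm k) d i := by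
    simp only [q, hrem, coeff_descPoly _ (show i < k by omega)]
  rw [hq, ← mul_assoc, ← mul_pow, neg_one_mul, neg_neg, one_pow, one_mul]
  rfl
end

section
/- In the quotient ring A = R[η]/(η^k + s_1 η^{k-1} + ... + s_k), where s_i are the elementary symmetric polynomials in x_1,...,x_k, the coefficient of η^{k-1} when η^{d+k-1} is expanded in the basis 1, η, ..., η^{k-1} equals (-1)^d · p_d(x_1,...,x_k), where p_d is the complete homogeneous symmetric polynomial of degree d. -/
/-!
Write `k + 1` for the number of variables, so `f = ∏ i, (η + x_i)`. Reversing
`η^(d+k) = f q + r` at degree `d + k + 1` gives `η = η^(d+1) rev r + rev f · rev q` with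
`deg (rev q) ≤ d`. In `R⟦t⟧` the reversed polynomial `rev f = ∏ i, (1 + x_i t)` is invertible;
multiplying by its inverse and comparing coefficients of `t^(d+1)` shows that the coefficient
of `η^k` in `r` is the `t^d`-coefficient of `∏ i, 1 / (1 + x_i t)`, namely `(-1)^d h_d`.
-/

open Finset Polynomial MvPolynomial

namespace Polynomial

variable {R : Type*} [CommRing R]

theorem reflect_prod {ι : Type*} (s : Finset ι) (p : ι → R[X]) (n : ι → ℕ)
    (h : ∀ i ∈ s, (p i).natDegree ≤ n i) :
    reflect (∑ i ∈ s, n i) (∏ i ∈ s, p i) = ∏ i ∈ s, reflect (n i) (p i) := by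
  classical
  induction s using Finset.induction with
  | empty => simp [reflect_one]
  | insert a s ha ih =>
    rw [prod_insert ha, prod_insert ha, sum_insert ha, reflect_mul _ _ (h a (mem_insert_self a s))
      ((natDegree_prod_le _ _).trans (sum_le_sum fun i hi => h i (mem_insert_of_mem hi))),
      ih fun i hi => h i (mem_insert_of_mem hi)]

theorem reflect_prod_X_add_C {ι : Type*} (s : Finset ι) (a : ι → R) :
    reflect #s (∏ i ∈ s, (X + C (a i))) = ∏ i ∈ s, (1 + C (a i) * X) := by
  nontriviality R
  rw [card_eq_sum_ones, reflect_prod _ _ _ fun i _ => (natDegree_X_add_C (a i)).le]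
  simp [reflect_add, reflect_C]

theorem coeff_X_pow_modByMonic_eq_coeff_of_reflect_mul_eq_one {f : R[X]} (hf : f.Monic) {k : ℕ}
    (hdeg : f.natDegree = k + 1) {ψ : PowerSeries R}
    (hψ : (reflect (k + 1) f : PowerSeries R) * ψ = 1) (d : ℕ) :
    (X ^ (d + k) %ₘ f).coeff k = PowerSeries.coeff d ψ := by
  nontriviality R
  have hr : (X ^ (d + k) %ₘ f).natDegree ≤ k := by
    have := natDegree_modByMonic_lt (X ^ (d + k)) hf fun h => by simp [h] at hdeg
    omega
  have hq : (X ^ (d + k) /ₘ f).natDegree ≤ d := by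
    rw [natDegree_divByMonic _ hf, natDegree_X_pow, hdeg]; omega
  have hψ0 : PowerSeries.constantCoeff ψ = 1 := by
    have := congrArg PowerSeries.constantCoeff hψ
    rwa [map_mul, map_one, constantCoeff_coe, coeff_reflect, revAt_zero, ← hdeg,
      hf.coeff_natDegree, one_mul] at this
  have hdiv : reflect k (X ^ (d + k) %ₘ f) * X ^ (d + 1)
      + reflect (k + 1) f * reflect d (X ^ (d + k) /ₘ f) = X := by
    have := congrArg (reflect (d + k + 1)) (modByMonic_add_div (X ^ (d + k)) f)
    rwa [reflect_add, reflect_monomial, revAt_le (by omega),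
      show d + k + 1 - (d + k) = 1 by omega, pow_one,
      show d + k + 1 = k + 1 + d by omega, reflect_mul _ _ hdeg.le hq,
      show k + 1 + d = k + (d + 1) by omega, ← mul_one (X ^ (d + k) %ₘ f),
      reflect_mul _ _ hr (natDegree_one.trans_le (Nat.zero_le _)), reflect_one] at this
  set r := X ^ (d + k) %ₘ f
  set q := X ^ (d + k) /ₘ f
  have hcoe : ((reflect k r : R[X]) : PowerSeries R) * ψ * PowerSeries.X ^ (d + 1)
      + ((reflect d q : R[X]) : PowerSeries R) = PowerSeries.X * ψ := by
    have h := congrArg (fun p : R[X] => (p : PowerSeries R)) hdiv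
    simp only [coe_add, coe_mul, coe_pow, coe_X] at h
    linear_combination ψ * h - ((reflect d q : R[X]) : PowerSeries R) * hψ
  have := congrArg (PowerSeries.coeff (0 + (d + 1))) hcoe
  rwa [map_add, PowerSeries.coeff_mul_X_pow, zero_add, PowerSeries.coeff_succ_X_mul,
    PowerSeries.coeff_zero_eq_constantCoeff_apply, map_mul, hψ0, mul_one, constantCoeff_coe,
    coeff_reflect, revAt_zero, coeff_coe, coeff_reflect, revAt_eq_self_of_lt (by omega),
    coeff_eq_zero_of_natDegree_lt (p := q) (by omega), add_zero] at this

end Polynomial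

theorem PowerSeries.coe_prod_one_add_C_mul_X_mul_rescale_neg_one_prod_rescale_mk_one
    {R ι : Type*} [CommRing R] (s : Finset ι) (a : ι → R) :
    ((∏ i ∈ s, (1 + Polynomial.C (a i) * Polynomial.X) : R[X]) : PowerSeries R)
      * rescale (-1) (∏ i ∈ s, rescale (a i) (mk 1)) = 1 := by
  have h : ∀ i ∈ s, ((1 + Polynomial.C (a i) * Polynomial.X : R[X]) : PowerSeries R)
      = rescale (a i * -1) (1 - X) := by
    intro i _
    simp [rescale_X]
  rw [← Polynomial.coeToPowerSeries.ringHom_apply, map_prod, map_prod]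
  simp only [Polynomial.coeToPowerSeries.ringHom_apply]
  rw [prod_congr rfl h, ← prod_mul_distrib]
  refine prod_eq_one fun i _ => ?_
  rw [← RingHom.comp_apply, ← rescale_mul, ← map_mul, mul_comm _ (mk 1), mk_one_mul_one_sub_eq_one,
    map_one]

theorem coeff_prod_rescale_X_mk_one_eq_hsymm (k d : ℕ) :
    PowerSeries.coeff d (∏ i : Fin k, PowerSeries.rescale (MvPolynomial.X i) (PowerSeries.mk 1))
      = _root_.hsymm k d := by
  rw [PowerSeries.coeff_prod, _root_.hsymm]
  refine sum_nbij' (⇑) Finsupp.equivFunOnFinite.symm (fun l hl => ?_) (fun l hl => ?_)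
    (fun l _ => Finsupp.equivFunOnFinite.symm_apply_apply l) (fun _ _ => rfl)
    (fun l _ => by simp [PowerSeries.coeff_rescale])
  · simpa [mem_finsuppAntidiag, Nat.mem_antidiagonalTuple] using hl
  · simpa [mem_finsuppAntidiag, Nat.mem_antidiagonalTuple] using hl

/-- Lemma 3.2: in `A = R[η]/(η^k + s_1 η^{k-1} + ⋯ + s_k)` with `R = ℤ[x_1,…,x_k]` and
`s_i` the elementary symmetric polynomials, the coefficient of `η^{k-1}` in the expansion of
`η^{d+k-1}` in the basis `1, η, …, η^{k-1}` equals `(-1)^d p_d`, the complete homogeneous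
symmetric polynomial of degree `d` (up to sign). -/
theorem stmt_7 (k : ℕ) (hk : 1 ≤ k) (d : ℕ) :
    let s : ℕ → MvPolynomial (Fin k) ℤ := fun i => esymm (Fin k) ℤ i
    let f : Polynomial (MvPolynomial (Fin k) ℤ) :=
      Polynomial.X ^ k + ∑ i ∈ range k, Polynomial.C (s (i + 1)) * Polynomial.X ^ (k - 1 - i)
    ((Polynomial.X ^ (d + k - 1)) %ₘ f).coeff (k - 1)
      = (-1 : MvPolynomial (Fin k) ℤ) ^ d * hsymm k d := by
  intro s f
  obtain ⟨k, rfl⟩ := Nat.exists_eq_add_of_le' hk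
  have hf : f = ∏ i : Fin (k + 1), (Polynomial.X + Polynomial.C (MvPolynomial.X i)) := by
    rw [prod_C_add_X_eq_sum_esymm, Fintype.card_fin, sum_range_succ', esymm_zero, map_one, one_mul,
      Nat.sub_zero]
    simp only [f, s]
    rw [add_comm (Polynomial.X ^ (k + 1))]
    refine congrArg (· + _) (sum_congr rfl fun i _ => ?_)
    rw [Nat.sub_sub, add_comm 1 i]
  have hψ := PowerSeries.coe_prod_one_add_C_mul_X_mul_rescale_neg_one_prod_rescale_mk_one univ
    (MvPolynomial.X : Fin (k + 1) → MvPolynomial (Fin (k + 1)) ℤ)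
  rw [← reflect_prod_X_add_C, card_univ, Fintype.card_fin] at hψ
  rw [hf, show d + (k + 1) - 1 = d + k by omega, Nat.add_sub_cancel,
    coeff_X_pow_modByMonic_eq_coeff_of_reflect_mul_eq_one
      (monic_prod_of_monic _ _ fun i _ => monic_X_add_C _) ?_ hψ,
    PowerSeries.coeff_rescale, coeff_prod_rescale_X_mk_one_eq_hsymm]
  simp [natDegree_prod_of_monic _ _ fun i _ => monic_X_add_C _]
end

section
/- For nonnegative integers e_1,...,e_k and m, the coefficient of the monomial x_0^m · x_1^{e_1} · ... · x_k^{e_k} in the complete homogeneous symmetric polynomial p_{m + e_1 + ... + e_k}(x_0+x_1, x_0+x_2, ..., x_0+x_k) (viewed as a polynomial in the k+1 variables x_0, x_1, ..., x_k) equals C(m + ∑e_i + k - 1, m). -/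
/-!
Expanding each factor `(x_0 + x_i) ^ f_i` binomially, the monomial `x_0^m x^e` occurs in
`∏ i, (x_0 + x_i) ^ f_i` only when `f = e + a` with `∑ a_i = m`, and then with coefficient
`∏ i, C(e_i + a_i, e_i)`. Summed over all such `a`, this is the coefficient of `t^m` in
`∏ i, (1 - t)^{-(e_i + 1)} = (1 - t)^{-(∑ e_i + k)}`, namely `C(m + ∑ e_i + k - 1, m)`.
-/

open Finset MvPolynomial

/-- The complete homogeneous symmetric polynomial of degree `d` in `k` variables, evaluated
at `x_0 + x_1, …, x_0 + x_k`, as a polynomial in the `k+1` variables `x_0, x_1, …, x_k`. -/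
noncomputable def hshift (k d : ℕ) : MvPolynomial (Fin (k + 1)) ℤ :=
  ∑ f ∈ Finset.Nat.antidiagonalTuple k d, ∏ i : Fin k, (X 0 + X i.succ) ^ f i

open scoped PowerSeries

namespace PowerSeries

/-- For `d = 0` the truncated `m + d - 1` makes the right-hand side `C(m - 1, m)`, which is the
coefficient `[m = 0]` of `1`. -/
theorem coeff_invOneSubPow_val (S : Type*) [CommRing S] (d m : ℕ) :
    coeff m (invOneSubPow S d).val = ((m + d - 1).choose m : S) := by
  cases d with
  | zero => rcases m with _ | m <;> simp [invOneSubPow_zero, coeff_one]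
  | succ d =>
    rw [invOneSubPow_val_succ_eq_mk_add_choose, coeff_mk, Nat.choose_symm_add]
    congr 2
    omega

theorem prod_invOneSubPow {ι : Type*} (S : Type*) [CommRing S] (s : Finset ι) (d : ι → ℕ) :
    ∏ i ∈ s, invOneSubPow S (d i) = invOneSubPow S (∑ i ∈ s, d i) := by
  simp only [invOneSubPow_eq_inv_one_sub_pow, prod_pow_eq_pow_sum]

end PowerSeries

namespace Finset

theorem sum_finsuppAntidiag_eq_sum_piAntidiag {ι M : Type*} [DecidableEq ι] [AddCommMonoid M]
    (s : Finset ι) (n : ℕ) (g : (ι → ℕ) → M) :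
    ∑ l ∈ s.finsuppAntidiag n, g l = ∑ f ∈ s.piAntidiag n, g f := by
  rw [finsuppAntidiag, sum_map]
  exact sum_attach (s.piAntidiag n) g

variable {ι : Type*} [Fintype ι] [DecidableEq ι]

theorem sum_piAntidiag_prod_add_choose (e : ι → ℕ) (m : ℕ) :
    ∑ a ∈ piAntidiag univ m, ∏ i, (e i + a i).choose (e i)
      = (m + ∑ i, e i + Fintype.card ι - 1).choose m := by
  have h := congrArg (fun u : ℤ⟦X⟧ˣ ↦ PowerSeries.coeff m u.val)
    (PowerSeries.prod_invOneSubPow ℤ univ (e · + 1))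
  simp only [Units.coe_prod, PowerSeries.coeff_prod, PowerSeries.coeff_invOneSubPow_val,
    PowerSeries.invOneSubPow_val_succ_eq_mk_add_choose, PowerSeries.coeff_mk] at h
  rw [sum_finsuppAntidiag_eq_sum_piAntidiag (g := fun a ↦ ∏ i, ((e i + a i).choose (e i) : ℤ)),
    sum_add_distrib, sum_const, card_univ, smul_eq_mul, mul_one, ← add_assoc] at h
  exact_mod_cast h

theorem sum_piAntidiag_ite_eq_sum_piAntidiag_add {M : Type*} [AddCommMonoid M] (e : ι → ℕ)
    [DecidablePred fun f : ι → ℕ ↦ ∀ i, e i ≤ f i] (m : ℕ) (g : (ι → ℕ) → M) :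
    ∑ f ∈ piAntidiag univ (m + ∑ i, e i),
        (if (∀ i, e i ≤ f i) ∧ ∑ i, (f i - e i) = m then g f else 0)
      = ∑ a ∈ piAntidiag univ m, g (e + a) := by
  rw [← sum_filter]
  refine sum_nbij' (· - e) (e + ·) ?_ ?_ ?_ ?_ ?_
  · intro f hf
    simpa using (mem_filter.mp hf).2.2
  · intro a ha
    simp only [mem_piAntidiag, mem_filter] at ha ⊢
    simp [sum_add_distrib, ha, add_comm]
  · intro f hf
    exact add_tsub_cancel_of_le fun i ↦ (mem_filter.mp hf).2.1 i
  · intro a _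
    exact add_tsub_cancel_left e a
  · intro f hf
    rw [add_tsub_cancel_of_le fun i ↦ (mem_filter.mp hf).2.1 i]

end Finset

namespace MvPolynomial

variable {R : Type*} [CommSemiring R] {k : ℕ}

theorem prod_X_zero_add_X_succ_pow_eq_sum_monomial (f : Fin k → ℕ) :
    ∏ i, (X 0 + X i.succ : MvPolynomial (Fin (k + 1)) R) ^ f i
      = ∑ g ∈ Fintype.piFinset (fun i ↦ range (f i + 1)),
          monomial (Finsupp.equivFunOnFinite.symm (Fin.cons (∑ i, (f i - g i)) g))
            (∏ i, ((f i).choose (g i) : R)) := by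
  simp_rw [add_comm (X 0 : MvPolynomial (Fin (k + 1)) R), add_pow, prod_univ_sum]
  refine sum_congr rfl fun g _ ↦ ?_
  rw [monomial_eq, Finsupp.prod_fintype _ _ (fun _ ↦ pow_zero _), Fin.prod_univ_succ]
  simp only [Finsupp.coe_equivFunOnFinite_symm, Fin.cons_zero, Fin.cons_succ,
    prod_mul_distrib, prod_pow_eq_pow_sum, map_prod, map_natCast]
  ring

theorem coeff_prod_X_zero_add_X_succ_pow (m : ℕ) (e f : Fin k → ℕ) :
    coeff (Finsupp.equivFunOnFinite.symm (Fin.cons m e))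
        (∏ i, (X 0 + X i.succ : MvPolynomial (Fin (k + 1)) R) ^ f i)
      = if (∀ i, e i ≤ f i) ∧ ∑ i, (f i - e i) = m then ((∏ i, (f i).choose (e i) : ℕ) : R)
        else 0 := by
  classical
  simp_rw [prod_X_zero_add_X_succ_pow_eq_sum_monomial, coeff_sum, coeff_monomial]
  simp only [Finsupp.equivFunOnFinite.symm.injective.eq_iff, Fin.cons_inj, and_comm (a := _ = m),
    ite_and, sum_ite_eq', Fintype.mem_piFinset, mem_range, Nat.lt_succ_iff, Nat.cast_prod]

end MvPolynomial

theorem stmt_8_general (k m : ℕ) (e : Fin k → ℕ) :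
    MvPolynomial.coeff (Finsupp.equivFunOnFinite.symm (Fin.cons m e))
        (hshift k (m + ∑ i, e i))
      = ((m + (∑ i, e i) + k - 1).choose m : ℤ) := by
  rw [hshift, ← piAntidiag_univ_fin_eq_antidiagonalTuple, coeff_sum]
  simp_rw [coeff_prod_X_zero_add_X_succ_pow]
  rw [sum_piAntidiag_ite_eq_sum_piAntidiag_add e m (fun f ↦ ((∏ i, (f i).choose (e i) : ℕ) : ℤ))]
  simpa using congrArg (Nat.cast (R := ℤ)) (sum_piAntidiag_prod_add_choose e m)

/-- Lemma 3.3 restated: the coefficient of `x_0^m x_1^{e_1} ⋯ x_k^{e_k}` in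
`p_{m+∑e_i}(x_0+x_1, …, x_0+x_k)` equals `C(m + ∑ e_i + k - 1, m)`. -/
theorem stmt_8 (k m : ℕ) (hk : 1 ≤ k) (e : Fin k → ℕ) :
    MvPolynomial.coeff (Finsupp.equivFunOnFinite.symm (Fin.cons m e))
        (hshift k (m + ∑ i, e i))
      = ((m + (∑ i, e i) + k - 1).choose m : ℤ) :=
  stmt_8_general k m e
end
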